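/- The infinite series Σ_{k=0}^{∞} binom(2k,k) · G(k) / (4^k · (2k+3)(2k+4)) converges and equals π³/96 - 47π/144 + 20/27, where G(k) = Σ_{j=0}^{k-1} 1/(2j+1)². -/

import Mathlib

/-- `G k = Σ_{j=0}^{k-1} 1/(2j+1)²`. -/
noncomputable def G (k : ℕ) : ℝ :=
  ∑ j ∈ Finset.range k, 1 / (2 * (j : ℝ) + 1) ^ 2

/-!
Write `b k = binom(2k,k)/4^k` (`centralBinomRatio`), `c k = b k * G k` and `P a y = Σ a k y^k`
(`powSeries`). Under `x = sin θ` the generating functions `Σ b k x^(2k) = 1/√(1-x²)`,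
`Σ b k x^(2k+1)/(2k+1) = arcsin x` and `Σ c k x^(2k) = arcsin² x / (2√(1-x²))` become, for
`|θ| < π/2`, `P b (sin² θ) cos θ = 1`, `sin θ P (b k/(2k+1)) (sin² θ) = θ` and
`P c (sin² θ) cos θ = θ²/2`. Each is obtained from the previous one by differentiating in `θ`:
a recurrence `(2k+2) a (k+1) = (2k+1) a k + d k` makes the derivative of `P a (sin² θ) cos θ`
equal to `sin θ P d (sin² θ)`, and `b`, `c` satisfy such recurrences with `d = 0` and
`d k = b k/(2k+1)`. Multiplying the last identity by `sin² θ (1 - sin θ)` and integrating over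
`[0, π/2]` term by term, where `∫ sin^(2k+2) θ (1 - sin θ) cos θ dθ = 1/((2k+3)(2k+4))`, the
series becomes `∫₀^{π/2} θ² sin² θ (1 - sin θ)/2 dθ`, which is elementary.
-/

open Real Set MeasureTheory

noncomputable def powSeries (a : ℕ → ℝ) (y : ℝ) : ℝ := ∑' n, a n * y ^ n

section PowSeries

variable {a : ℕ → ℝ} {C y : ℝ}

lemma summable_succ_mul_geometric {r : ℝ} (hr : |r| < 1) :
    Summable fun n : ℕ => ((n : ℝ) + 1) * r ^ n := by
  have h := summable_pow_mul_geometric_of_norm_lt_one 1 (R := ℝ) (by rwa [Real.norm_eq_abs])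
  simpa [add_mul] using h.add (summable_geometric_of_abs_lt_one hr)

lemma hasSum_powSeries (ha : ∀ n, |a n| ≤ C) (hy : |y| < 1) :
    HasSum (fun n => a n * y ^ n) (powSeries a y) := by
  refine Summable.hasSum <| .of_norm_bounded
    ((summable_geometric_of_lt_one (abs_nonneg y) hy).mul_left C) fun n => ?_
  rw [norm_mul, norm_pow, Real.norm_eq_abs, Real.norm_eq_abs]
  exact mul_le_mul_of_nonneg_right (ha n) (by positivity)

lemma hasSum_powSeries_succ_mul (ha : ∀ n, |a n| ≤ C) (hy : |y| < 1) :
    HasSum (fun n : ℕ => (n + 1) * a (n + 1) * y ^ n)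
      (powSeries (fun n => (n + 1) * a (n + 1)) y) := by
  refine Summable.hasSum <| .of_norm_bounded
    ((summable_succ_mul_geometric (r := |y|) (by rwa [abs_abs])).mul_left C) fun n => ?_
  rw [norm_mul, norm_mul, norm_pow, Real.norm_eq_abs, Real.norm_eq_abs, Real.norm_eq_abs,
    abs_of_nonneg (by positivity : (0 : ℝ) ≤ n + 1)]
  calc (n + 1) * |a (n + 1)| * |y| ^ n ≤ (n + 1) * C * |y| ^ n := by gcongr; exact ha (n + 1)
    _ = C * ((n + 1) * |y| ^ n) := by ring

lemma hasSum_natCast_mul_mul_pow (ha : ∀ n, |a n| ≤ C) (hy : |y| < 1) :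
    HasSum (fun n : ℕ => n * a n * y ^ n) (y * powSeries (fun n => (n + 1) * a (n + 1)) y) := by
  rw [← hasSum_nat_add_iff' 1]
  simpa [pow_succ, mul_comm, mul_left_comm, mul_assoc] using
    (hasSum_powSeries_succ_mul ha hy).mul_left y

lemma powSeries_zero (a : ℕ → ℝ) : powSeries a 0 = a 0 := by
  rw [powSeries, tsum_eq_single 0 fun n hn => by simp [hn]]
  simp

lemma hasDerivAt_powSeries (ha : ∀ n, |a n| ≤ C) (hy : |y| < 1) :
    HasDerivAt (powSeries a) (powSeries (fun n => (n + 1) * a (n + 1)) y) y := by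
  obtain ⟨r, hyr, hr1⟩ := exists_between hy
  have hu : Summable fun n : ℕ => C * (n * r ^ (n - 1)) := by
    refine ((summable_nat_add_iff 1).mp ?_).mul_left C
    simpa using summable_succ_mul_geometric (r := r)
      (by rwa [abs_of_pos ((abs_nonneg y).trans_lt hyr)])
  have hbound : ∀ n, ∀ z ∈ Ioo (-r) r, ‖a n * (n * z ^ (n - 1))‖ ≤ C * (n * r ^ (n - 1)) := by
    intro n z hz
    have hzr : |z| ≤ r := (abs_lt.mpr hz).le
    have hC : 0 ≤ C := (abs_nonneg _).trans (ha 0)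
    rw [norm_mul, norm_mul, norm_pow, Real.norm_eq_abs, Real.norm_eq_abs, Real.norm_eq_abs,
      Nat.abs_cast]
    gcongr
    exact ha n
  have hsum₀ : Summable fun n => a n * (0 : ℝ) ^ n :=
    summable_of_ne_finset_zero (s := {0}) fun n hn => by
      simp [zero_pow (by simpa using hn : n ≠ 0)]
  have hderiv := hasDerivAt_tsum_of_isPreconnected (g := fun n z => a n * z ^ n)
    (g' := fun n z => a n * (n * z ^ (n - 1))) hu isOpen_Ioo isPreconnected_Ioo
    (fun n z _ => (hasDerivAt_pow n z).const_mul (a n)) hbound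
    ⟨by linarith [abs_nonneg y], by linarith [abs_nonneg y]⟩ hsum₀ (abs_lt.mp hyr)
  have hsum : HasSum (fun n => a n * (n * y ^ (n - 1)))
      (powSeries (fun n => (n + 1) * a (n + 1)) y) := by
    rw [← hasSum_nat_add_iff' 1]
    simpa [mul_comm, mul_left_comm, mul_assoc] using hasSum_powSeries_succ_mul ha hy
  rwa [← hsum.tsum_eq]

end PowSeries

lemma eqOn_Ioo_of_hasDerivAt {f g f' : ℝ → ℝ} {a b x₀ : ℝ}
    (hf : ∀ x ∈ Ioo a b, HasDerivAt f (f' x) x) (hg : ∀ x ∈ Ioo a b, HasDerivAt g (f' x) x)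
    (hx₀ : x₀ ∈ Ioo a b) (hfg : f x₀ = g x₀) : EqOn f g (Ioo a b) :=
  isOpen_Ioo.eqOn_of_deriv_eq isPreconnected_Ioo
    (fun x hx => (hf x hx).differentiableAt.differentiableWithinAt)
    (fun x hx => (hg x hx).differentiableAt.differentiableWithinAt)
    (fun x hx => (hf x hx).deriv.trans (hg x hx).deriv.symm) hx₀ hfg

lemma hasSum_intervalIntegral_of_nonneg {F : ℕ → ℝ → ℝ} {f : ℝ → ℝ} {a b : ℝ}
    (hF : ∀ n, AEStronglyMeasurable (F n) (volume.restrict (uIoc a b)))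
    (hf : IntervalIntegrable f volume a b) (hF₀ : ∀ n, ∀ t ∈ uIoc a b, 0 ≤ F n t)
    (hsum : ∀ t ∈ uIoc a b, HasSum (F · t) (f t)) :
    HasSum (fun n => ∫ t in a..b, F n t) (∫ t in a..b, f t) :=
  intervalIntegral.hasSum_integral_of_dominated_convergence F hF
    (fun n => ae_of_all _ fun t ht => (norm_of_nonneg (hF₀ n t ht)).le)
    (ae_of_all _ fun t ht => (hsum t ht).summable)
    (hf.congr_uIoo fun t ht => (hsum t (Ioo_subset_Ioc_self ht)).tsum_eq.symm)
    (ae_of_all _ hsum)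

lemma zero_mem_Ioo_neg_pi_div_two : (0 : ℝ) ∈ Ioo (-(π / 2)) (π / 2) :=
  ⟨by linarith [pi_pos], by linarith [pi_pos]⟩

lemma abs_sin_sq_lt_one {θ : ℝ} (hθ : θ ∈ Ioo (-(π / 2)) (π / 2)) : |sin θ ^ 2| < 1 := by
  have := cos_pos_of_mem_Ioo hθ
  rw [abs_of_nonneg (sq_nonneg _)]
  nlinarith [sin_sq_add_cos_sq θ]

section SinSubstitution

variable {a d : ℕ → ℝ} {C θ : ℝ}

lemma hasDerivAt_powSeries_sin_sq_mul_cos (ha : ∀ n, |a n| ≤ C)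
    (hd : ∀ n : ℕ, (2 * n + 2) * a (n + 1) = (2 * n + 1) * a n + d n)
    (hθ : θ ∈ Ioo (-(π / 2)) (π / 2)) :
    HasDerivAt (fun θ => powSeries a (sin θ ^ 2) * cos θ) (sin θ * powSeries d (sin θ ^ 2)) θ := by
  have hu := abs_sin_sq_lt_one hθ
  set P' := powSeries (fun n => (n + 1) * a (n + 1)) (sin θ ^ 2)
  have hsum : HasSum (fun n => d n * (sin θ ^ 2) ^ n)
      (2 * P' - 2 * (sin θ ^ 2 * P') - powSeries a (sin θ ^ 2)) := by
    refine ((((hasSum_powSeries_succ_mul ha hu).mul_left 2).sub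
      ((hasSum_natCast_mul_mul_pow ha hu).mul_left 2)).sub
      (hasSum_powSeries ha hu)).congr_fun fun n => ?_
    linear_combination (-(sin θ ^ 2) ^ n) * hd n
  have hderiv := ((hasDerivAt_powSeries ha hu).comp θ ((hasDerivAt_sin θ).pow 2)).mul
    (hasDerivAt_cos θ)
  refine hderiv.congr_deriv ?_
  rw [show powSeries d (sin θ ^ 2) = _ from hsum.tsum_eq]
  simp only [Function.comp_apply, Pi.pow_apply]
  linear_combination (2 * sin θ * P') * sin_sq_add_cos_sq θ

lemma hasDerivAt_sin_mul_powSeries_sin_sq (ha : ∀ n, |a n| ≤ C)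
    (hd : ∀ n : ℕ, (2 * n + 1) * a n = d n) (hθ : θ ∈ Ioo (-(π / 2)) (π / 2)) :
    HasDerivAt (fun θ => sin θ * powSeries a (sin θ ^ 2)) (cos θ * powSeries d (sin θ ^ 2)) θ := by
  have hu := abs_sin_sq_lt_one hθ
  set P' := powSeries (fun n => (n + 1) * a (n + 1)) (sin θ ^ 2)
  have hsum : HasSum (fun n => d n * (sin θ ^ 2) ^ n)
      (powSeries a (sin θ ^ 2) + 2 * (sin θ ^ 2 * P')) := by
    refine ((hasSum_powSeries ha hu).add
      ((hasSum_natCast_mul_mul_pow ha hu).mul_left 2)).congr_fun fun n => ?_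
    linear_combination (-(sin θ ^ 2) ^ n) * hd n
  have hderiv := (hasDerivAt_sin θ).mul
    ((hasDerivAt_powSeries ha hu).comp θ ((hasDerivAt_sin θ).pow 2))
  refine hderiv.congr_deriv ?_
  rw [show powSeries d (sin θ ^ 2) = _ from hsum.tsum_eq]
  simp only [Function.comp_apply, Pi.pow_apply]
  ring

end SinSubstitution

noncomputable def centralBinomRatio (k : ℕ) : ℝ := (Nat.choose (2 * k) k : ℝ) / 4 ^ k

lemma centralBinomRatio_zero : centralBinomRatio 0 = 1 := by simp [centralBinomRatio]

lemma centralBinomRatio_succ (k : ℕ) :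
    (2 * k + 2) * centralBinomRatio (k + 1) = (2 * k + 1) * centralBinomRatio k := by
  have h : ((k + 1 : ℕ) : ℝ) * (Nat.choose (2 * (k + 1)) (k + 1) : ℝ)
      = 2 * (2 * k + 1) * (Nat.choose (2 * k) k : ℝ) := by
    simpa [Nat.centralBinom_eq_two_mul_choose] using
      congrArg (Nat.cast : ℕ → ℝ) (Nat.succ_mul_centralBinom_succ k)
  push_cast at h
  simp only [centralBinomRatio, pow_succ]
  field_simp
  linear_combination 2 * h

lemma centralBinomRatio_nonneg (k : ℕ) : 0 ≤ centralBinomRatio k := by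
  unfold centralBinomRatio; positivity

lemma abs_centralBinomRatio_le_one (k : ℕ) : |centralBinomRatio k| ≤ 1 := by
  rw [abs_of_nonneg (centralBinomRatio_nonneg k)]
  induction k with
  | zero => simp [centralBinomRatio_zero]
  | succ k ih =>
    have := centralBinomRatio_succ k
    nlinarith [centralBinomRatio_nonneg k, centralBinomRatio_nonneg (k + 1)]

lemma G_succ (k : ℕ) : G (k + 1) = G k + 1 / (2 * k + 1) ^ 2 := by
  simp [G, Finset.sum_range_succ]

lemma G_nonneg (k : ℕ) : 0 ≤ G k :=
  Finset.sum_nonneg fun _ _ => by positivity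

lemma G_le_two (k : ℕ) : G k ≤ 2 := by
  suffices G k ≤ 2 - 2 / (k + 1) by linarith [show 0 ≤ 2 / ((k : ℝ) + 1) by positivity]
  induction k with
  | zero => simp [G]
  | succ k ih =>
    have key : 1 / (2 * (k : ℝ) + 1) ^ 2 ≤ 2 / (k + 1) - 2 / (k + 1 + 1) := by
      rw [div_sub_div _ _ (by positivity) (by positivity),
        div_le_div_iff₀ (by positivity) (by positivity)]
      nlinarith
    rw [G_succ]
    push_cast
    linarith

lemma abs_centralBinomRatio_mul_G_le_two (k : ℕ) : |centralBinomRatio k * G k| ≤ 2 := by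
  rw [abs_mul, abs_of_nonneg (G_nonneg k)]
  nlinarith [abs_centralBinomRatio_le_one k, G_le_two k, G_nonneg k,
    abs_nonneg (centralBinomRatio k)]

lemma centralBinomRatio_mul_G_succ (k : ℕ) :
    (2 * k + 2) * (centralBinomRatio (k + 1) * G (k + 1))
      = (2 * k + 1) * (centralBinomRatio k * G k) + centralBinomRatio k / (2 * k + 1) := by
  rw [← mul_assoc, centralBinomRatio_succ, G_succ]
  field_simp

lemma powSeries_centralBinomRatio_sin_sq_mul_cos {θ : ℝ} (hθ : θ ∈ Ioo (-(π / 2)) (π / 2)) :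
    powSeries centralBinomRatio (sin θ ^ 2) * cos θ = 1 := by
  have hderiv : ∀ x ∈ Ioo (-(π / 2)) (π / 2),
      HasDerivAt (fun θ => powSeries centralBinomRatio (sin θ ^ 2) * cos θ) 0 x := fun x hx => by
    simpa [powSeries] using hasDerivAt_powSeries_sin_sq_mul_cos abs_centralBinomRatio_le_one
      (d := 0) (fun n => by simpa using centralBinomRatio_succ n) hx
  exact eqOn_Ioo_of_hasDerivAt hderiv (fun x _ => hasDerivAt_const x 1)
    zero_mem_Ioo_neg_pi_div_two (by simp [powSeries_zero, centralBinomRatio_zero]) hθ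

lemma sin_mul_powSeries_centralBinomRatio_div_sin_sq {θ : ℝ}
    (hθ : θ ∈ Ioo (-(π / 2)) (π / 2)) :
    sin θ * powSeries (fun k => centralBinomRatio k / (2 * k + 1)) (sin θ ^ 2) = θ := by
  have habs : ∀ k : ℕ, |centralBinomRatio k / (2 * k + 1)| ≤ 1 := fun k => by
    rw [abs_div, abs_of_pos (by positivity : (0 : ℝ) < 2 * k + 1)]
    refine div_le_one_of_le₀ ((abs_centralBinomRatio_le_one k).trans ?_) (by positivity)
    linarith [k.cast_nonneg (α := ℝ)]
  have hderiv : ∀ x ∈ Ioo (-(π / 2)) (π / 2), HasDerivAt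
      (fun θ => sin θ * powSeries (fun k => centralBinomRatio k / (2 * k + 1)) (sin θ ^ 2)) 1 x :=
    fun x hx => by
      have h := hasDerivAt_sin_mul_powSeries_sin_sq habs
        (fun k => mul_div_cancel₀ _ (by positivity)) hx
      rwa [mul_comm, powSeries_centralBinomRatio_sin_sq_mul_cos hx] at h
  exact eqOn_Ioo_of_hasDerivAt hderiv (fun x _ => hasDerivAt_id x)
    zero_mem_Ioo_neg_pi_div_two (by simp) hθ

lemma powSeries_centralBinomRatio_mul_G_sin_sq_mul_cos {θ : ℝ}
    (hθ : θ ∈ Ioo (-(π / 2)) (π / 2)) :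
    powSeries (fun k => centralBinomRatio k * G k) (sin θ ^ 2) * cos θ = θ ^ 2 / 2 := by
  have hderiv : ∀ x ∈ Ioo (-(π / 2)) (π / 2), HasDerivAt
      (fun θ => powSeries (fun k => centralBinomRatio k * G k) (sin θ ^ 2) * cos θ) x x :=
    fun x hx => by
      have h := hasDerivAt_powSeries_sin_sq_mul_cos abs_centralBinomRatio_mul_G_le_two
        centralBinomRatio_mul_G_succ hx
      rwa [sin_mul_powSeries_centralBinomRatio_div_sin_sq hx] at h
  refine eqOn_Ioo_of_hasDerivAt (g := fun x => x ^ 2 / 2) hderiv (fun x _ => ?_)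
    zero_mem_Ioo_neg_pi_div_two (by simp [powSeries_zero, G]) hθ
  simpa using (hasDerivAt_pow 2 x).div_const 2

lemma hasSum_centralBinomRatio_mul_G_mul_sin_sq_pow {θ : ℝ}
    (hθ : θ ∈ Ioc (-(π / 2)) (π / 2)) :
    HasSum (fun k => centralBinomRatio k * G k *
        ((sin θ ^ 2) ^ k * (sin θ ^ 2 * (1 - sin θ) * cos θ)))
      (θ ^ 2 * sin θ ^ 2 * (1 - sin θ) / 2) := by
  rcases hθ.2.lt_or_eq with hlt | rfl
  · have hθ' : θ ∈ Ioo (-(π / 2)) (π / 2) := ⟨hθ.1, hlt⟩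
    have hval : powSeries (fun k => centralBinomRatio k * G k) (sin θ ^ 2)
        * (sin θ ^ 2 * (1 - sin θ) * cos θ) = θ ^ 2 * sin θ ^ 2 * (1 - sin θ) / 2 := by
      linear_combination (sin θ ^ 2 * (1 - sin θ)) *
        powSeries_centralBinomRatio_mul_G_sin_sq_mul_cos hθ'
    rw [← hval]
    refine ((hasSum_powSeries abs_centralBinomRatio_mul_G_le_two
      (abs_sin_sq_lt_one hθ')).mul_right _).congr_fun fun k => ?_
    ring
  · simp

lemma sin_sq_mul_one_sub_sin_mul_cos_nonneg {θ : ℝ} (hθ : θ ∈ Icc (-(π / 2)) (π / 2)) :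
    0 ≤ sin θ ^ 2 * (1 - sin θ) * cos θ := by
  have := sin_le_one θ
  have := cos_nonneg_of_mem_Icc hθ
  positivity

lemma integral_sin_pow_mul_cos (n : ℕ) :
    ∫ θ in (0 : ℝ)..(π / 2), sin θ ^ n * cos θ = 1 / (n + 1) := by
  simpa [integral_pow] using integral_sin_pow_mul_cos_pow_odd (a := 0) (b := π / 2) n 0

lemma integral_sin_sq_pow_mul (k : ℕ) :
    ∫ θ in (0 : ℝ)..(π / 2), (sin θ ^ 2) ^ k * (sin θ ^ 2 * (1 - sin θ) * cos θ)
      = 1 / ((2 * (k : ℝ) + 3) * (2 * (k : ℝ) + 4)) := by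
  have h : ∀ θ, (sin θ ^ 2) ^ k * (sin θ ^ 2 * (1 - sin θ) * cos θ)
      = sin θ ^ (2 * k + 2) * cos θ - sin θ ^ (2 * k + 3) * cos θ := fun θ => by ring
  simp_rw [h]
  rw [intervalIntegral.integral_sub ((by fun_prop : Continuous _).intervalIntegrable _ _)
    ((by fun_prop : Continuous _).intervalIntegrable _ _), integral_sin_pow_mul_cos,
    integral_sin_pow_mul_cos]
  field_simp
  push_cast
  ring

lemma integral_sq_mul_sin_sq_mul_one_sub_sin :
    ∫ θ in (0 : ℝ)..(π / 2), θ ^ 2 * sin θ ^ 2 * (1 - sin θ) / 2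
      = π ^ 3 / 96 - 47 * π / 144 + 20 / 27 := by
  -- integrate by parts after writing `sin² t = (1 - cos 2t)/2`, `sin³ t = (3 sin t - sin 3t)/4`
  have hderiv : ∀ t : ℝ, HasDerivAt (fun t => t ^ 3 / 12 - t ^ 2 * sin (2 * t) / 8
      - t * cos (2 * t) / 8 + sin (2 * t) / 16 + t ^ 2 * cos t * 3 / 8 - t * sin t * 3 / 4
      - cos t * 3 / 4 - t ^ 2 * cos (3 * t) / 24 + t * sin (3 * t) / 36 + cos (3 * t) / 108)
      (t ^ 2 * sin t ^ 2 * (1 - sin t) / 2) t := fun t => by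
    have h2 := (hasDerivAt_id t).const_mul 2
    have h3 := (hasDerivAt_id t).const_mul 3
    have hp := hasDerivAt_pow 2 t
    have H := (((((((((((hasDerivAt_pow 3 t).div_const 12).sub ((hp.mul h2.sin).div_const 8)).sub
      (((hasDerivAt_id t).mul h2.cos).div_const 8)).add (h2.sin.div_const 16)).add
      (((hp.mul (hasDerivAt_cos t)).mul_const 3).div_const 8)).sub
      ((((hasDerivAt_id t).mul (hasDerivAt_sin t)).mul_const 3).div_const 4)).sub
      (((hasDerivAt_cos t).mul_const 3).div_const 4)).sub ((hp.mul h3.cos).div_const 24)).add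
      (((hasDerivAt_id t).mul h3.sin).div_const 36)).add (h3.cos.div_const 108))
    refine H.congr_deriv ?_
    simp only [id, cos_two_mul, sin_two_mul, cos_three_mul, sin_three_mul]
    linear_combination (-t ^ 2 / 2) * sin_sq_add_cos_sq t
  rw [intervalIntegral.integral_eq_sub_of_hasDerivAt (fun t _ => hderiv t)
    ((by fun_prop : Continuous _).intervalIntegrable _ _)]
  have h2 : 2 * (π / 2) = π := by ring
  have h3 : 3 * (π / 2) = π + π / 2 := by ring
  simp [h2, h3, sin_add, cos_add]
  ring

theorem central_binom_G_series :
    HasSum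
      (fun k : ℕ =>
        (Nat.choose (2 * k) k : ℝ) * G k /
          (4 ^ k * (2 * (k : ℝ) + 3) * (2 * (k : ℝ) + 4)))
      (Real.pi ^ 3 / 96 - 47 * Real.pi / 144 + 20 / 27) := by
  have hIoc : uIoc 0 (π / 2) ⊆ Ioc (-(π / 2)) (π / 2) := by
    rw [uIoc_of_le (by positivity)]
    exact Ioc_subset_Ioc_left (by linarith [pi_pos])
  have key := hasSum_intervalIntegral_of_nonneg (F := fun k θ =>
      centralBinomRatio k * G k * ((sin θ ^ 2) ^ k * (sin θ ^ 2 * (1 - sin θ) * cos θ)))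
    (fun k => (by fun_prop : Continuous _).aestronglyMeasurable)
    ((by fun_prop : Continuous _).intervalIntegrable _ _)
    (fun k θ hθ => mul_nonneg (mul_nonneg (centralBinomRatio_nonneg k) (G_nonneg k))
      (mul_nonneg (by positivity)
        (sin_sq_mul_one_sub_sin_mul_cos_nonneg (Ioc_subset_Icc_self (hIoc hθ)))))
    (fun θ hθ => hasSum_centralBinomRatio_mul_G_mul_sin_sq_pow (hIoc hθ))
  rw [integral_sq_mul_sin_sq_mul_one_sub_sin] at key
  refine key.congr_fun fun k => ?_
  rw [intervalIntegral.integral_const_mul, integral_sin_sq_pow_mul, centralBinomRatio]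
  field_simp
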